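/- For every k ≥ 1 and every n ≥ k + 3, the number of isomorphism classes of blocks on n elements having nullity k that are RC-lattices satisfies |𝓑(n,k)| = Σ_{r=2}^{2k} |𝓑(n,k,r)|, where 𝓑(n,k,r) denotes the isomorphism classes of such blocks having exactly r reducible elements. -/

import Mathlib

/-- An element of a lattice is join-reducible if it is the join of two elements
both distinct from it. -/
def JoinReducible {α : Type*} [Lattice α] (x : α) : Prop :=
  ∃ y z : α, y ≠ x ∧ z ≠ x ∧ y ⊔ z = x

/-- An element of a lattice is meet-reducible if it is the meet of two elements
both distinct from it. -/
def MeetReducible {α : Type*} [Lattice α] (x : α) : Prop :=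
  ∃ y z : α, y ≠ x ∧ z ≠ x ∧ y ⊓ z = x

/-- An element is reducible if it is join-reducible or meet-reducible. -/
def Reducible {α : Type*} [Lattice α] (x : α) : Prop :=
  JoinReducible x ∨ MeetReducible x

/-- `Red(L)`: the set of reducible elements of the lattice. -/
def RedSet (α : Type*) [Lattice α] : Set α := {x | Reducible x}

/-- `Irr(L)`: the set of doubly irreducible (i.e. non-reducible) elements. -/
def IrrSet (α : Type*) [Lattice α] : Set α := {x | ¬ Reducible x}

/-- The cover graph of a poset: vertices are the elements, edges are covering pairs. -/
def coverGraph (α : Type*) [PartialOrder α] : SimpleGraph α where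
  Adj x y := x ⋖ y ∨ y ⋖ x
  symm := ⟨fun _ _ h => h.symm⟩
  loopless := ⟨fun x h => by rcases h with h | h <;> exact h.lt.false⟩

/-- The nullity of a (finite) poset: `m - n + c` where `m` is the number of edges,
`n` the number of vertices and `c` the number of connected components of the cover graph. -/
noncomputable def nullity (α : Type*) [PartialOrder α] : ℤ :=
  (Nat.card (coverGraph α).edgeSet : ℤ) - (Nat.card α : ℤ)
    + (Nat.card (coverGraph α).ConnectedComponent : ℤ)

/-- A block: a (finite) lattice whose greatest element is join-reducible and whose
least element is meet-reducible. -/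
def IsBlock (α : Type*) [Lattice α] : Prop :=
  (∃ t : α, (∀ x, x ≤ t) ∧ JoinReducible t) ∧ (∃ b : α, (∀ x, b ≤ x) ∧ MeetReducible b)

/-- The partial order underlying a lattice structure given as a term. -/
def latPO {n : ℕ} (L : Lattice (Fin n)) : PartialOrder (Fin n) :=
  @SemilatticeInf.toPartialOrder _ (@Lattice.toSemilatticeInf _ L)

/-- `L` is an RC-lattice structure: any two reducible elements are comparable. -/
def IsRCLat {n : ℕ} (L : Lattice (Fin n)) : Prop :=
  ∀ x y : Fin n, @Reducible _ L x → @Reducible _ L y →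
    (latPO L).le x y ∨ (latPO L).le y x

/-- The number of isomorphism classes of lattice structures on `Fin n`
(i.e. of lattices with `n` elements) satisfying `P`. -/
noncomputable def numIsoClasses (n : ℕ) (P : Lattice (Fin n) → Prop) : ℕ :=
  Nat.card (Quot fun (L₁ L₂ : {L : Lattice (Fin n) // P L}) =>
    ∃ e : Fin n ≃ Fin n, ∀ x y : Fin n,
      (latPO L₁.1).le x y ↔ (latPO L₂.1).le (e x) (e y))

/-- `𝓑(n,k)`: blocks on `n` elements of nullity `k` which are RC-lattices. -/
def BlockP (n k : ℕ) (L : Lattice (Fin n)) : Prop :=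
  @IsBlock _ L ∧ @nullity (Fin n) (latPO L) = (k : ℤ) ∧ IsRCLat L

/-- `𝓑(n,k,r)`: members of `𝓑(n,k)` with exactly `r` reducible elements. -/
def BlockPr (n k r : ℕ) (L : Lattice (Fin n)) : Prop :=
  BlockP n k L ∧ (@RedSet _ L).ncard = r

/-- `𝓛(n,k)`: RC-lattices on `n` elements of nullity `k`. -/
def RCLatP (n k : ℕ) (L : Lattice (Fin n)) : Prop :=
  IsRCLat L ∧ @nullity (Fin n) (latPO L) = (k : ℤ)

/-! Counting the edges of the cover graph by their upper ends: every element of a finite lattice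
other than the bottom has a lower cover, and a join-reducible one has at least two, so
`|J| + n ≤ m + 1`, and dually `|M| + n ≤ m + 1`. The cover graph of a lattice is connected, so its
nullity is `m - n + 1`, whence `|Red| ≤ |J| + |M| ≤ 2η`. The top and the bottom of a block are
distinct reducible elements, so `|Red| ≥ 2`. As `|Red|` is an isomorphism invariant, the classes
of `𝓑(n,k)` split according to the value of `|Red| ∈ [2, 2k]`. -/

open Finset

section CoverGraph

variable {α : Type*} [PartialOrder α]

lemma coverGraph_reachable_of_le [Finite α] {x y : α} (h : x ≤ y) :
    (coverGraph α).Reachable x y := by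
  induction x using WellFoundedGT.induction with
  | _ x ih =>
    rcases h.eq_or_lt with rfl | hlt
    · rfl
    · obtain ⟨z, hxz, hzy⟩ := exists_covBy_le_of_lt hlt
      exact (SimpleGraph.Adj.reachable (Or.inl hxz)).trans (ih z hxz.lt hzy)

lemma coverGraph_connected_of_isTop [Finite α] {t : α} (ht : IsTop t) :
    (coverGraph α).Connected :=
  (SimpleGraph.connected_iff_exists_forall_reachable _).2
    ⟨t, fun x => (coverGraph_reachable_of_le (ht x)).symm⟩

lemma nullity_eq_of_isTop [Finite α] {t : α} (ht : IsTop t) :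
    nullity α = Nat.card (coverGraph α).edgeSet - Nat.card α + 1 := by
  have := (coverGraph_connected_of_isTop ht).preconnected.subsingleton_connectedComponent
  have : Nonempty (coverGraph α).ConnectedComponent := ⟨(coverGraph α).connectedComponentMk t⟩
  rw [nullity, (Nat.card_eq_one_iff_unique (α := (coverGraph α).ConnectedComponent)).2
    ⟨‹_›, ‹_›⟩, Nat.cast_one]

lemma card_edgeSet_coverGraph [Fintype α] :
    Nat.card (coverGraph α).edgeSet = ∑ x, Nat.card {y : α // y ⋖ x} := by
  let toEdge : (Σ x : α, {y : α // y ⋖ x}) → (coverGraph α).edgeSet :=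
    fun p => ⟨s(p.2.1, p.1), Or.inl p.2.2⟩
  have hbij : Function.Bijective toEdge := by
    constructor
    · rintro ⟨x, y, hyx⟩ ⟨x', y', hyx'⟩ h
      replace h := congrArg Subtype.val h
      simp only [toEdge, Sym2.eq_iff] at h
      rcases h with ⟨rfl, rfl⟩ | ⟨rfl, rfl⟩
      · rfl
      · exact absurd (hyx.lt.trans hyx'.lt) (lt_irrefl _)
    · rintro ⟨e, he⟩
      induction e using Sym2.ind with
      | _ a b =>
        rcases he with h | h
        · exact ⟨⟨b, a, h⟩, rfl⟩
        · exact ⟨⟨a, b, h⟩, Subtype.ext Sym2.eq_swap⟩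
  rw [← Nat.card_eq_of_bijective toEdge hbij, Nat.card_sigma]

lemma card_edgeSet_coverGraph_orderDual :
    Nat.card (coverGraph αᵒᵈ).edgeSet = Nat.card (coverGraph α).edgeSet :=
  Nat.card_congr (SimpleGraph.hasseDualIso (α := α)).mapEdgeSet

end CoverGraph

section Reducible

variable {α : Type*} [Lattice α]

lemma not_joinReducible_of_isBot {b : α} (hb : IsBot b) : ¬ JoinReducible b := by
  rintro ⟨y, z, hy, -, h⟩
  exact hy (le_antisymm (h ▸ le_sup_left) (hb y))

lemma two_le_card_covBy_of_joinReducible [Finite α] {x : α} (hx : JoinReducible x) :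
    2 ≤ Nat.card {y : α // y ⋖ x} := by
  obtain ⟨u, v, hu, hv, rfl⟩ := hx
  obtain ⟨y, huy, hy⟩ := exists_le_covBy_of_lt (lt_of_le_of_ne le_sup_left hu)
  obtain ⟨z, hvz, hz⟩ := exists_le_covBy_of_lt (lt_of_le_of_ne le_sup_right hv)
  have hyz : y ≠ z := by
    rintro rfl
    exact hy.lt.not_ge (sup_le huy hvz)
  have : Nontrivial {w : α // w ⋖ u ⊔ v} := ⟨⟨y, hy⟩, ⟨z, hz⟩, by simpa⟩
  exact Finite.one_lt_card

lemma ncard_joinReducible_add_card_le [Finite α] {b : α} (hb : IsBot b) :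
    {x : α | JoinReducible x}.ncard + Nat.card α ≤ Nat.card (coverGraph α).edgeSet + 1 := by
  classical
  have := Fintype.ofFinite α
  have hcov : ∀ x, x ≠ b →
      1 + (if JoinReducible x then 1 else 0) ≤ Nat.card {y : α // y ⋖ x} := by
    intro x hxb
    split_ifs with hx
    · exact two_le_card_covBy_of_joinReducible hx
    · obtain ⟨y, -, hy⟩ := exists_le_covBy_of_lt ((hb x).lt_of_ne' hxb)
      have : Nonempty {y : α // y ⋖ x} := ⟨⟨y, hy⟩⟩
      exact Nat.card_pos
  calc {x : α | JoinReducible x}.ncard + Nat.card α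
      = ∑ x : α, (1 + if JoinReducible x then 1 else 0) := by
        rw [sum_add_distrib, sum_boole, Set.ncard_eq_toFinset_card', Set.toFinset_ofPred]
        simp [Nat.card_eq_fintype_card, add_comm]
    _ = 1 + ∑ x ∈ univ.erase b, (1 + if JoinReducible x then 1 else 0) := by
        rw [← add_sum_erase _ _ (mem_univ b), if_neg (not_joinReducible_of_isBot hb)]
    _ ≤ 1 + ∑ x ∈ univ.erase b, Nat.card {y : α // y ⋖ x} := by
        gcongr with x hx
        exact hcov x (ne_of_mem_erase hx)
    _ ≤ Nat.card (coverGraph α).edgeSet + 1 := by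
        rw [card_edgeSet_coverGraph, add_comm]
        gcongr
        exact erase_subset _ _

lemma ncard_meetReducible_add_card_le [Finite α] {t : α} (ht : IsTop t) :
    {x : α | MeetReducible x}.ncard + Nat.card α ≤ Nat.card (coverGraph α).edgeSet + 1 := by
  have h := ncard_joinReducible_add_card_le (α := αᵒᵈ) (b := OrderDual.toDual t) ht
  rwa [card_edgeSet_coverGraph_orderDual, Nat.card_congr OrderDual.ofDual] at h

theorem ncard_redSet_le_two_mul_nullity [Finite α] {t b : α} (ht : IsTop t) (hb : IsBot b) :
    ((RedSet α).ncard : ℤ) ≤ 2 * nullity α := by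
  have hred : (RedSet α).ncard ≤
      {x : α | JoinReducible x}.ncard + {x : α | MeetReducible x}.ncard :=
    Set.ncard_union_le _ _
  have hJ := ncard_joinReducible_add_card_le hb
  have hM := ncard_meetReducible_add_card_le ht
  rw [nullity_eq_of_isTop ht]
  omega

lemma IsBlock.two_le_ncard_redSet [Finite α] (hB : IsBlock α) : 2 ≤ (RedSet α).ncard := by
  obtain ⟨⟨t, -, ht⟩, b, hb, hb'⟩ := hB
  have htb : t ≠ b := by
    rintro rfl
    exact not_joinReducible_of_isBot hb ht
  calc 2 = ({t, b} : Set α).ncard := (Set.ncard_pair htb).symm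
    _ ≤ (RedSet α).ncard := Set.ncard_le_ncard (by
        rintro x (rfl | rfl)
        exacts [Or.inl ht, Or.inr hb'])

end Reducible

section OrderIso

variable {α β : Type*} [Lattice α] [Lattice β]

lemma Reducible.orderIso (e : α ≃o β) {x : α} (hx : Reducible x) : Reducible (e x) := by
  rcases hx with ⟨y, z, hy, hz, h⟩ | ⟨y, z, hy, hz, h⟩
  · exact Or.inl ⟨e y, e z, e.injective.ne hy, e.injective.ne hz, by rw [← e.map_sup, h]⟩
  · exact Or.inr ⟨e y, e z, e.injective.ne hy, e.injective.ne hz, by rw [← e.map_inf, h]⟩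

lemma OrderIso.reducible_apply_iff (e : α ≃o β) {x : α} : Reducible (e x) ↔ Reducible x :=
  ⟨fun h => by simpa using h.orderIso e.symm, Reducible.orderIso e⟩

lemma OrderIso.ncard_redSet_eq (e : α ≃o β) : (RedSet α).ncard = (RedSet β).ncard :=
  Nat.card_congr (e.toEquiv.subtypeEquiv fun _ => e.reducible_apply_iff.symm)

end OrderIso

instance Lattice.finite {α : Type*} [Finite α] : Finite (Lattice α) :=
  Finite.of_injective (fun L : Lattice α => L.le) fun _ _ h =>
    Lattice.ext fun x y => iff_of_eq (congrFun₂ h x y)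

section QuotFiber

variable {X M : Type*} {P : X → Prop} {R : X → X → Prop} {f : X → M}

lemma Nat.card_quot_fiber_eq (hR : ∀ x y, R x y → f x = f y) (i : M) :
    Nat.card (Quot fun a b : {x // P x ∧ f x = i} => R a b) =
      Nat.card {q : Quot (fun a b : {x // P x} => R a b) //
        Quot.lift (fun a : {x // P x} => f a) (fun a b h => hR a b h) q = i} := by
  classical
  let ι : (Quot fun a b : {x // P x ∧ f x = i} => R a b) →
      {q : Quot (fun a b : {x // P x} => R a b) //
        Quot.lift (fun a : {x // P x} => f a) (fun a b h => hR a b h) q = i} :=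
    Quot.lift (fun a => ⟨Quot.mk _ ⟨a.1, a.2.1⟩, a.2.2⟩)
      fun _ _ h => Subtype.ext (Quot.sound h)
  -- `ι` is injective since it has a left inverse, defined on the whole quotient via `Option`
  let back : Quot (fun a b : {x // P x} => R a b) →
      Option (Quot fun a b : {x // P x ∧ f x = i} => R a b) :=
    Quot.lift (fun a => if h : f a = i then some (Quot.mk _ ⟨a.1, a.2, h⟩) else none)
      fun a b hab => by
        by_cases h : f a = i
        · rw [dif_pos h, dif_pos (hR _ _ hab ▸ h)]
          exact congrArg some (Quot.sound hab)
        · rw [dif_neg h, dif_neg (hR _ _ hab ▸ h)]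
  have hback : ∀ q, back (ι q).1 = some q := by
    rintro ⟨a, ha, rfl⟩
    exact dif_pos rfl
  refine Nat.card_eq_of_bijective ι ⟨fun q q' h => Option.some.inj ?_, ?_⟩
  · rw [← hback, h, hback]
  · rintro ⟨⟨a, ha⟩, rfl⟩
    exact ⟨Quot.mk _ ⟨a, ha, rfl⟩, rfl⟩

theorem Nat.card_quot_eq_sum_card_quot_fiber [Finite X] [DecidableEq M] (s : Finset M)
    (hs : ∀ x, P x → f x ∈ s) (hR : ∀ x y, R x y → f x = f y) :
    Nat.card (Quot fun a b : {x // P x} => R a b) =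
      ∑ i ∈ s, Nat.card (Quot fun a b : {x // P x ∧ f x = i} => R a b) := by
  classical
  have := Fintype.ofFinite (Quot fun a b : {x // P x} => R a b)
  simp only [Nat.card_quot_fiber_eq hR, Nat.card_eq_fintype_card, Fintype.card_subtype]
  refine card_eq_sum_card_fiberwise fun q _ => ?_
  induction q using Quot.ind with
  | mk a => exact hs a.1 a.2

end QuotFiber

theorem stmt12_general (n k : ℕ) :
    numIsoClasses n (BlockP n k) =
      ∑ r ∈ Finset.Icc 2 (2 * k), numIsoClasses n (BlockPr n k r) := by
  refine Nat.card_quot_eq_sum_card_quot_fiber (f := fun L => (@RedSet _ L).ncard)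
    (R := fun L₁ L₂ =>
      ∃ e : Fin n ≃ Fin n, ∀ x y, (latPO L₁).le x y ↔ (latPO L₂).le (e x) (e y))
    _ ?_ ?_
  · rintro L ⟨hB, hnull, -⟩
    let _ := L
    have hlow := hB.two_le_ncard_redSet
    obtain ⟨⟨t, ht, -⟩, b, hb, -⟩ := hB
    have hup : ((RedSet (Fin n)).ncard : ℤ) ≤ 2 * k :=
      hnull ▸ ncard_redSet_le_two_mul_nullity ht hb
    exact mem_Icc.2 ⟨hlow, by omega⟩
  · rintro L₁ L₂ ⟨e, he⟩
    exact @OrderIso.ncard_redSet_eq _ _ L₁ L₂ ⟨e, (he _ _).symm⟩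

/-- For `k ≥ 1` and `n ≥ k + 3`: `|𝓑(n,k)| = Σ_{r=2}^{2k} |𝓑(n,k,r)|`. -/
theorem stmt12 (n k : ℕ) (hk : 1 ≤ k) (hn : k + 3 ≤ n) :
    numIsoClasses n (BlockP n k) =
      ∑ r ∈ Finset.Icc 2 (2 * k), numIsoClasses n (BlockPr n k r) :=
  stmt12_general n k
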